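/- Let V be a finite-dimensional real vector space equipped with null data (γ, ℓ, ℓ⁽²⁾, P, n, n⁽²⁾ = 0) satisfying the four contraction identities. Let ϑ ∈ V* satisfy ϑ(n) ≠ 0, let u ∈ ℝ be arbitrary, and define the vector V₀ := ϑ(n)⁻¹·P(ϑ,·) + u·n (identifying P(ϑ,·) ∈ V** with a vector of V). Then ℓ(X) + γ(V₀, X) = 0 for every X ∈ ker ϑ. (Consequently, for any nowhere-zero gauge factor z, the gauge-transformed one-form ℓ' = z(ℓ + γ(V₀,·)) annihilates ker ϑ; this is the pointwise content of the statement that the pull-back of ℓ to a transverse submanifold can be set to zero by a gauge transformation.) -/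

import Mathlib

open Module

/-- The vector of `V` corresponding to `P(ρ,·) ∈ V**`, via the canonical
identification `V ≅ V**`. -/
noncomputable def Pvec {V : Type*} [AddCommGroup V] [Module ℝ V] [FiniteDimensional ℝ V]
    (P : LinearMap.BilinForm ℝ (Module.Dual ℝ V)) (ρ : Module.Dual ℝ V) : V :=
  (Module.evalEquiv ℝ V).symm (P ρ)

/-!
Applying `ϑ` to the fourth contraction identity gives `P(γ(X,·), ϑ) = -ℓ(X) ϑ(n)` on `ker ϑ`.
By the two symmetries, `γ(P(ϑ,·), X) = P(γ(X,·), ϑ)`, and `γ(n,·) = 0` for null data, so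
`ℓ(X) + γ(V₀, X) = ℓ(X) - ℓ(X) = 0`.
-/

section

variable {V : Type*} [AddCommGroup V] [Module ℝ V] [FiniteDimensional ℝ V]

lemma dual_apply_Pvec (P : LinearMap.BilinForm ℝ (Dual ℝ V)) (ρ α : Dual ℝ V) :
    α (Pvec P ρ) = P ρ α := by
  simp [Pvec]

lemma bilinForm_Pvec_apply (γ : LinearMap.BilinForm ℝ V) (hγsym : ∀ X Y : V, γ X Y = γ Y X)
    (P : LinearMap.BilinForm ℝ (Dual ℝ V)) (hPsym : ∀ α β, P α β = P β α) (ϑ : Dual ℝ V)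
    (X : V) : γ (Pvec P ϑ) X = P (γ X) ϑ := by
  rw [hγsym, dual_apply_Pvec, hPsym]

lemma P_apply_add_eq_of_contraction (γ : LinearMap.BilinForm ℝ V) (ℓ : Dual ℝ V)
    (P : LinearMap.BilinForm ℝ (Dual ℝ V)) (n : V)
    (h4 : ∀ X : V, Pvec P (γ X) + ℓ X • n = X) (ϑ : Dual ℝ V) (X : V) :
    P (γ X) ϑ + ℓ X * ϑ n = ϑ X := by
  simpa [dual_apply_Pvec] using congrArg ϑ (h4 X)

end

theorem gauge_kills_ell_on_transverse_general {V : Type*} [AddCommGroup V] [Module ℝ V]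
    [FiniteDimensional ℝ V]
    (γ : LinearMap.BilinForm ℝ V) (hγsym : ∀ X Y : V, γ X Y = γ Y X)
    (ℓ : Module.Dual ℝ V)
    (P : LinearMap.BilinForm ℝ (Module.Dual ℝ V)) (hPsym : ∀ α β, P α β = P β α)
    (n : V) (n2 : ℝ) (hn2 : n2 = 0)
    (h1 : γ n + n2 • ℓ = 0)
    (h4 : ∀ X : V, Pvec P (γ X) + ℓ X • n = X)
    (ϑ : Module.Dual ℝ V) (hϑ : ϑ n ≠ 0) (u : ℝ) :
    ∀ X : V, ϑ X = 0 → ℓ X + γ ((ϑ n)⁻¹ • Pvec P ϑ + u • n) X = 0 := by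
  intro X hX
  have hγn : γ n = 0 := by simpa [hn2] using h1
  have hPϑ : P (γ X) ϑ = -(ℓ X * ϑ n) := by
    linarith [P_apply_add_eq_of_contraction γ ℓ P n h4 ϑ X]
  calc ℓ X + γ ((ϑ n)⁻¹ • Pvec P ϑ + u • n) X
      = ℓ X + (ϑ n)⁻¹ * P (γ X) ϑ := by
        simp [hγn, bilinForm_Pvec_apply γ hγsym P hPsym]
    _ = 0 := by
        rw [hPϑ]
        field_simp
        ring

/-- For null hypersurface data, given `ϑ ∈ V*` with `ϑ(n) ≠ 0` and any `u ∈ ℝ`, the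
vector `V₀ = ϑ(n)⁻¹·P(ϑ,·) + u·n` satisfies `ℓ(X) + γ(V₀,X) = 0` for all `X ∈ ker ϑ`:
the gauge-transformed `ℓ' = z(ℓ + γ(V₀,·))` annihilates `ker ϑ`. -/
theorem gauge_kills_ell_on_transverse {V : Type*} [AddCommGroup V] [Module ℝ V]
    [FiniteDimensional ℝ V]
    (γ : LinearMap.BilinForm ℝ V) (hγsym : ∀ X Y : V, γ X Y = γ Y X)
    (ℓ : Module.Dual ℝ V) (ℓ2 : ℝ)
    (P : LinearMap.BilinForm ℝ (Module.Dual ℝ V)) (hPsym : ∀ α β, P α β = P β α)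
    (n : V) (n2 : ℝ) (hn2 : n2 = 0)
    (h1 : γ n + n2 • ℓ = 0)
    (h2 : ℓ n + n2 * ℓ2 = 1)
    (h3 : Pvec P ℓ + ℓ2 • n = 0)
    (h4 : ∀ X : V, Pvec P (γ X) + ℓ X • n = X)
    (ϑ : Module.Dual ℝ V) (hϑ : ϑ n ≠ 0) (u : ℝ) :
    ∀ X : V, ϑ X = 0 → ℓ X + γ ((ϑ n)⁻¹ • Pvec P ϑ + u • n) X = 0 :=
  gauge_kills_ell_on_transverse_general γ hγsym ℓ P hPsym n n2 hn2 h1 h4 ϑ hϑ u
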